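/- arXiv:0911.2646 — 3 statements merged into one kernel-verified Lean document; each statement's English description precedes it below -/
import Mathlib

section
/- If z = x + iy with y ≠ 0 solves 1/z + c⁻¹·(1/n)Σ_j 1/(τ_j − z) = λ with λ > δ > 0, c > 1, τ_j > 0, then |x| ≤ (1 + c^{−1/2})/λ. -/
lemma aux_real (n : ℕ) (hn : 1 ≤ n) (c lam A x y : ℝ) (t d : Fin n → ℝ)
    (hc : 1 < c) (hlam0 : 0 < lam) (hA : 0 < A) (hy : y ≠ 0)
    (hdval : ∀ j, d j = (t j)^2 + y^2)
    (hxA : x^2 + y^2 = A)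
    (hIm : -y/A + c⁻¹ * ((n:ℝ)⁻¹ * ∑ j, y / d j) = 0)
    (hRe : x/A + c⁻¹ * ((n:ℝ)⁻¹ * ∑ j, t j / d j) = lam) :
    |x| ≤ (1 + (Real.sqrt c)⁻¹) / lam := by
  have hc0 : (0:ℝ) < c := by linarith
  have hn0 : (0:ℝ) < (n:ℝ) := by exact_mod_cast hn
  have hcne : c ≠ 0 := hc0.ne'
  have hnne : (n:ℝ) ≠ 0 := hn0.ne'
  have hy2 : 0 < y^2 := by positivity
  have hd : ∀ j, 0 < d j := by
    intro j; rw [hdval j]; nlinarith [sq_nonneg (t j)]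
  set S := ∑ j, (d j)⁻¹ with hSdef
  have hS0 : 0 ≤ S := Finset.sum_nonneg fun j _ => inv_nonneg.mpr (hd j).le
  have hsum : ∑ j, y / d j = y * S := by
    rw [hSdef, Finset.mul_sum]
    exact Finset.sum_congr rfl fun j _ => div_eq_mul_inv y (d j)
  have hkey : c⁻¹ * ((n:ℝ)⁻¹ * S) = A⁻¹ := by
    apply mul_left_cancel₀ hy
    have h1 : y * (c⁻¹ * ((n:ℝ)⁻¹ * S)) = c⁻¹ * ((n:ℝ)⁻¹ * (y * S)) := by ring
    rw [h1, ← hsum]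
    have h2 : y * A⁻¹ = y / A := (div_eq_mul_inv y A).symm
    rw [h2]
    linear_combination hIm
  have hS : S = (n:ℝ) * c / A := by
    calc S = c * ((n:ℝ) * (c⁻¹ * ((n:ℝ)⁻¹ * S))) := by field_simp
      _ = c * ((n:ℝ) * A⁻¹) := by rw [hkey]
      _ = (n:ℝ) * c / A := by ring
  -- Cauchy-Schwarz
  set T := ∑ j, |t j| / d j with hTdef
  have hT0 : 0 ≤ T := Finset.sum_nonneg fun j _ => div_nonneg (abs_nonneg _) (hd j).le
  have hCS : T^2 ≤ (∑ j, (t j)^2 / d j) * S := by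
    have h := Finset.sum_mul_sq_le_sq_mul_sq Finset.univ
      (fun j => |t j| / Real.sqrt (d j)) (fun j => (Real.sqrt (d j))⁻¹)
    have e1 : ∑ j, (|t j| / Real.sqrt (d j)) * (Real.sqrt (d j))⁻¹ = T := by
      rw [hTdef]
      refine Finset.sum_congr rfl fun j _ => ?_
      rw [← Real.mul_self_sqrt (hd j).le]
      have hs : Real.sqrt (d j) ≠ 0 := (Real.sqrt_pos.mpr (hd j)).ne'
      field_simp
      rw [Real.sqrt_sq (Real.sqrt_nonneg (d j))]
    have e2 : ∑ j, (|t j| / Real.sqrt (d j))^2 = ∑ j, (t j)^2 / d j := by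
      refine Finset.sum_congr rfl fun j _ => ?_
      rw [div_pow, sq_abs, Real.sq_sqrt (hd j).le]
    have e3 : ∑ j, ((Real.sqrt (d j))⁻¹)^2 = S := by
      rw [hSdef]
      refine Finset.sum_congr rfl fun j _ => ?_
      rw [inv_pow, Real.sq_sqrt (hd j).le]
    calc T^2 = (∑ j, (|t j| / Real.sqrt (d j)) * (Real.sqrt (d j))⁻¹)^2 := by rw [e1]
      _ ≤ (∑ j, (|t j| / Real.sqrt (d j))^2) * (∑ j, ((Real.sqrt (d j))⁻¹)^2) := h
      _ = (∑ j, (t j)^2 / d j) * S := by rw [e2, e3]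
  have hsum1 : ∑ j, (t j)^2 / d j ≤ (n:ℝ) := by
    calc ∑ j, (t j)^2 / d j ≤ ∑ j : Fin n, (1:ℝ) := by
          refine Finset.sum_le_sum fun j _ => ?_
          rw [div_le_one (hd j), hdval j]
          nlinarith
      _ = (n:ℝ) := by simp
  have hT2 : T^2 ≤ (n:ℝ)^2 * c / A := by
    calc T^2 ≤ (∑ j, (t j)^2 / d j) * S := hCS
      _ ≤ (n:ℝ) * ((n:ℝ) * c / A) := by
          rw [hS]
          apply mul_le_mul_of_nonneg_right hsum1
          positivity
      _ = (n:ℝ)^2 * c / A := by ring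
  set B := (n:ℝ) * Real.sqrt c / Real.sqrt A with hBdef
  have hsA : 0 < Real.sqrt A := Real.sqrt_pos.mpr hA
  have hsc : 0 < Real.sqrt c := Real.sqrt_pos.mpr hc0
  have hB0 : 0 ≤ B := by positivity
  have hTB : T ≤ B := by
    have hB2 : B^2 = (n:ℝ)^2 * c / A := by
      rw [hBdef, div_pow, mul_pow, Real.sq_sqrt hc0.le, Real.sq_sqrt hA.le]
    calc T = Real.sqrt (T^2) := (Real.sqrt_sq hT0).symm
      _ ≤ Real.sqrt (B^2) := Real.sqrt_le_sqrt (by rw [hB2]; exact hT2)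
      _ = B := Real.sqrt_sq hB0
  have hxs : |x| ≤ Real.sqrt A := by
    rw [← Real.sqrt_sq_eq_abs]
    exact Real.sqrt_le_sqrt (by nlinarith)
  have hterm : ∑ j, t j / d j ≤ T := by
    rw [hTdef]
    exact Finset.sum_le_sum fun j _ => (div_le_div_iff_of_pos_right (hd j)).mpr (le_abs_self _)
  have hcinv : (0:ℝ) ≤ c⁻¹ := inv_nonneg.mpr hc0.le
  have hninv : (0:ℝ) ≤ (n:ℝ)⁻¹ := inv_nonneg.mpr hn0.le
  have hlamle : lam ≤ |x|/A + c⁻¹ * ((n:ℝ)⁻¹ * T) := by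
    rw [← hRe]
    have h1 : x/A ≤ |x|/A := (div_le_div_iff_of_pos_right hA).mpr (le_abs_self x)
    have h2 : c⁻¹ * ((n:ℝ)⁻¹ * ∑ j, t j / d j) ≤ c⁻¹ * ((n:ℝ)⁻¹ * T) :=
      mul_le_mul_of_nonneg_left (mul_le_mul_of_nonneg_left hterm hninv) hcinv
    linarith
  have hAs : Real.sqrt A * Real.sqrt A = A := Real.mul_self_sqrt hA.le
  have hcs : Real.sqrt c * Real.sqrt c = c := Real.mul_self_sqrt hc0.le
  have h3 : |x|/A ≤ (Real.sqrt A)⁻¹ := by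
    calc |x|/A ≤ Real.sqrt A / A := (div_le_div_iff_of_pos_right hA).mpr hxs
      _ = (Real.sqrt A)⁻¹ := by rw [← hAs]; field_simp; rw [Real.sqrt_sq (Real.sqrt_nonneg A)]
  have hc_eq : c⁻¹ * ((n:ℝ)⁻¹ * B) = (Real.sqrt c)⁻¹ / Real.sqrt A := by
    rw [hBdef]
    field_simp
    linear_combination hcs
  have h4 : c⁻¹ * ((n:ℝ)⁻¹ * T) ≤ (Real.sqrt c)⁻¹ / Real.sqrt A := by
    rw [← hc_eq]
    exact mul_le_mul_of_nonneg_left (mul_le_mul_of_nonneg_left hTB hninv) hcinv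
  have hfin : lam ≤ (1 + (Real.sqrt c)⁻¹) / Real.sqrt A := by
    calc lam ≤ |x|/A + c⁻¹ * ((n:ℝ)⁻¹ * T) := hlamle
      _ ≤ (Real.sqrt A)⁻¹ + (Real.sqrt c)⁻¹ / Real.sqrt A := add_le_add h3 h4
      _ = (1 + (Real.sqrt c)⁻¹) / Real.sqrt A := by field_simp
  rw [le_div_iff₀ hlam0]
  have hfin2 : lam * Real.sqrt A ≤ 1 + (Real.sqrt c)⁻¹ := (le_div_iff₀ hsA).mp hfin
  calc |x| * lam ≤ Real.sqrt A * lam := mul_le_mul_of_nonneg_right hxs hlam0.le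
    _ = lam * Real.sqrt A := by ring
    _ ≤ 1 + (Real.sqrt c)⁻¹ := hfin2


theorem stmt_13 (n : ℕ) (hn : 1 ≤ n) (τ : Fin n → ℝ) (hτ : ∀ j, 0 < τ j)
    (c : ℝ) (hc : 1 < c) (δ lam : ℝ) (hδ : 0 < δ) (hlam : δ < lam)
    (z : ℂ) (hy : z.im ≠ 0)
    (heq : 1 / z + (c : ℂ)⁻¹ * ((1 / n) * ∑ j, 1 / ((τ j : ℂ) - z)) = (lam : ℂ)) :
    |z.re| ≤ (1 + (Real.sqrt c)⁻¹) / lam := by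
  have hlam0 : 0 < lam := hδ.trans hlam
  have hz : z ≠ 0 := fun h => hy (by simp [h])
  have hA : 0 < Complex.normSq z := Complex.normSq_pos.mpr hz
  have hIm := congrArg Complex.im heq
  have hRe := congrArg Complex.re heq
  simp [Complex.add_im, Complex.add_re, Complex.mul_im, Complex.mul_re,
    Complex.inv_im, Complex.inv_re, Complex.div_im, Complex.div_re,
    Complex.im_sum, Complex.re_sum, Complex.sub_im, Complex.sub_re] at hIm hRe
  exact aux_real n hn c lam (Complex.normSq z) z.re z.im
    (fun j => τ j - z.re) (fun j => Complex.normSq ((τ j : ℂ) - z))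
    hc hlam0 hA hy
    (fun j => by simp [Complex.normSq_apply, Complex.sub_re, Complex.sub_im]; ring)
    (by rw [Complex.normSq_apply]; ring)
    hIm hRe
end

section
/- If x > 0 is a real solution of 1/x + c⁻¹·(1/n)Σ_j 1/(τ_j − x) = λ with λ > 0, c > 1, τ_j > 0, x ≠ τ_j for all j, and moreover c⁻¹(1/n)Σ_j 1/(x−τ_j)² < 1/x² (the derivative condition), then (1 − c^{−1/2})/λ ≤ x ≤ (1 + c^{−1/2})/λ. -/
theorem stmt_14 (n : ℕ) (hn : 1 ≤ n) (τ : Fin n → ℝ) (hτ : ∀ j, 0 < τ j)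
    (c : ℝ) (hc : 1 < c) (lam : ℝ) (hlam : 0 < lam)
    (x : ℝ) (hx : 0 < x) (hxτ : ∀ j, x ≠ τ j)
    (heq : 1 / x + c⁻¹ * ((1 / n) * ∑ j, 1 / (τ j - x)) = lam)
    (hder : c⁻¹ * ((1 / n) * ∑ j, 1 / (x - τ j) ^ 2) < 1 / x ^ 2) :
    (1 - (Real.sqrt c)⁻¹) / lam ≤ x ∧ x ≤ (1 + (Real.sqrt c)⁻¹) / lam := by
  have hn' : (0:ℝ) < n := by exact_mod_cast hn
  have hc0 : (0:ℝ) < c := by linarith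
  set s := Real.sqrt c with hs
  have hs2 : s ^ 2 = c := Real.sq_sqrt hc0.le
  have hs1 : 1 < s := by
    nlinarith [Real.sqrt_nonneg c]
  have hs0 : 0 < s := by linarith
  set S1 := ∑ j, 1 / (τ j - x) with hS1
  set S2 := ∑ j, 1 / (x - τ j) ^ 2 with hS2
  have hCS : S1 ^ 2 ≤ n * S2 := by
    have h := sq_sum_le_card_mul_sum_sq (s := Finset.univ) (f := fun j => 1 / (τ j - x))
    simp only [Finset.card_univ, Fintype.card_fin] at h
    have : ∑ j, (1 / (τ j - x)) ^ 2 = S2 := by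
      apply Finset.sum_congr rfl
      intro j _
      rw [div_pow]
      ring_nf
    rw [this] at h
    exact h
  -- key: c * (lam - 1/x)^2 < 1/x^2
  have hkey : c * (lam - 1 / x) ^ 2 < 1 / x ^ 2 := by
    have heq' : lam - 1 / x = c⁻¹ * ((1 / n) * S1) := by linarith
    rw [heq']
    have hc' : (0:ℝ) < c⁻¹ := by positivity
    have h1 : (c⁻¹ * ((1 / n) * S1)) ^ 2 = c⁻¹ * c⁻¹ * (S1 ^ 2 / n ^ 2) := by
      ring
    rw [h1]
    have h2 : c⁻¹ * (S1 ^ 2 / n ^ 2) ≤ c⁻¹ * ((1 / n) * S2) := by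
      apply mul_le_mul_of_nonneg_left _ hc'.le
      rw [div_le_iff₀ (by positivity)]
      calc S1 ^ 2 ≤ n * S2 := hCS
        _ = 1 / n * S2 * n ^ 2 := by field_simp
    calc c * (c⁻¹ * c⁻¹ * (S1 ^ 2 / n ^ 2)) = (c * c⁻¹) * (c⁻¹ * (S1 ^ 2 / n ^ 2)) := by
          ring
      _ = c⁻¹ * (S1 ^ 2 / n ^ 2) := by rw [mul_inv_cancel₀ hc0.ne', one_mul]
      _ ≤ c⁻¹ * ((1 / n) * S2) := h2
      _ < 1 / x ^ 2 := hder
  have hsq : (s * (lam - 1 / x)) ^ 2 < (1 / x) ^ 2 := by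
    rw [mul_pow, hs2]
    calc c * (lam - 1 / x) ^ 2 < 1 / x ^ 2 := hkey
      _ = (1 / x) ^ 2 := by rw [div_pow, one_pow]
  obtain ⟨hl, hr⟩ := abs_lt_of_sq_lt_sq' hsq (by positivity)
  have hx1 : x * (1 / x) = 1 := by field_simp
  have hss : s * s⁻¹ = 1 := mul_inv_cancel₀ hs0.ne'
  have e1 : s * (lam - 1 / x) * x = s * (lam * x - 1) := by
    field_simp
  have e2 : -(1 / x) * x = -1 := by field_simp
  have e3 : 1 / x * x = 1 := by field_simp
  have hl' : s * (lam * x - 1) > -1 := by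
    have h := mul_lt_mul_of_pos_right hl hx
    rw [e2, e1] at h
    exact h
  have hr' : s * (lam * x - 1) < 1 := by
    have h := mul_lt_mul_of_pos_right hr hx
    rw [e1, e3] at h
    exact h
  constructor
  · rw [div_le_iff₀ hlam]
    nlinarith [hl', hss, hs0]
  · rw [le_div_iff₀ hlam]
    nlinarith [hr', hss, hs0]
end

section
/- Let l : [a,b] → ℝ be nondecreasing with l(x₂) − l(x₁) ≤ C√(x₂ − x₁) for all a ≤ x₁ ≤ x₂ ≤ b. Then for x₁ < x₂ ≤ x₀ in [a,b], the Stieltjes integral −∫_{x₁}^{x₂} ln|x − x₀| dl(x) ≤ C'·√(x₂−x₁)·|ln(x₂−x₁)| for small x₂ − x₁ (where the constant C' depends on C and the integration by parts identity −∫_{x₁}^{x₂} ln(x₀−x) dl(x) = −(l(x₂)−l(x₁))ln(x₀−x₂) − ∫_{x₁}^{x₂} (l(x)−l(x₁))/(x₀−x) dx is used; the stated bound follows when x₀ = x₂). -/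
open MeasureTheory in
lemma aux_exp_ioi (T : ℝ) :
    IntegrableOn (fun t : ℝ => Real.exp (-t / 2)) (Set.Ioi T) ∧
      ∫ t in Set.Ioi T, Real.exp (-t / 2) = 2 * Real.exp (-T / 2) := by
  have hint : IntegrableOn (fun t : ℝ => Real.exp (-t / 2)) (Set.Ioi T) := by
    have := exp_neg_integrableOn_Ioi T (by norm_num : (0:ℝ) < 1/2)
    apply this.congr_fun _ measurableSet_Ioi
    intro x _
    ring_nf
  refine ⟨hint, ?_⟩
  have key : ∫ t in Set.Ioi T, Real.exp (-t / 2)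
      = (0 : ℝ) - (-2 * Real.exp (-T / 2)) := by
    apply integral_Ioi_of_hasDerivAt_of_tendsto'
      (f := fun t => -2 * Real.exp (-t / 2)) (m := 0)
    · intro x _
      have h1 : HasDerivAt (fun t : ℝ => -t / 2) (-1 / 2) x := by
        simpa using ((hasDerivAt_id x).neg.div_const 2)
      have h2 : HasDerivAt (fun t : ℝ => Real.exp (-t / 2))
          (Real.exp (-x / 2) * (-1 / 2)) x := (Real.hasDerivAt_exp _).comp x h1
      have h3 := h2.const_mul (-2 : ℝ)
      convert h3 using 1
      · rfl
      · ring
    · exact hint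
    · have h1 : Filter.Tendsto (fun t : ℝ => -t / 2) Filter.atTop Filter.atBot := by
        have := Filter.Tendsto.atBot_div_const (by norm_num : (0:ℝ) < 2)
          (Filter.tendsto_neg_atBot_iff.mpr Filter.tendsto_id)
        simpa using this
      have h2 : Filter.Tendsto (fun t : ℝ => Real.exp (-t / 2)) Filter.atTop (nhds 0) :=
        Real.tendsto_exp_atBot.comp h1
      simpa using h2.const_mul (-2 : ℝ)
  rw [key]; ring

open MeasureTheory in
theorem stmt_15 (C : ℝ) (hC : 0 < C) :
    ∃ C' > 0, ∀ (x₁ x₂ : ℝ), 0 < x₂ - x₁ → x₂ - x₁ < 1 / Real.exp 1 →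
      ∀ l : StieltjesFunction ℝ, Continuous l →
        (∀ x y, x₁ ≤ x → x ≤ y → y ≤ x₂ → l y - l x ≤ C * Real.sqrt (y - x)) →
        ∫ x in Set.Ioc x₁ x₂, -Real.log (x₂ - x) ∂l.measure
          ≤ C' * Real.sqrt (x₂ - x₁) * Real.log (1 / (x₂ - x₁)) := by
  refine ⟨3 * C, by positivity, ?_⟩
  intro x₁ x₂ hδ hδe l hl hhold
  set δ := x₂ - x₁ with hδdef
  have hexp1 : (1:ℝ) < Real.exp 1 := by
    have := Real.exp_one_gt_d9; linarith
  have hδ1 : δ < 1 := by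
    have : 1 / Real.exp 1 < 1 := by
      rw [div_lt_one (Real.exp_pos 1)]; exact hexp1
    linarith
  set T := Real.log (1 / δ) with hTdef
  have hT1 : 1 ≤ T := by
    rw [hTdef, Real.le_log_iff_exp_le (by positivity), le_div_iff₀ hδ]
    have h := (lt_div_iff₀ (Real.exp_pos 1)).mp hδe
    calc Real.exp 1 * δ = δ * Real.exp 1 := mul_comm _ _
      _ ≤ 1 := h.le
  have hT0 : 0 < T := lt_of_lt_of_le one_pos hT1
  have hsq : 0 < Real.sqrt δ := Real.sqrt_pos.mpr hδ
  set f : ℝ → ℝ := fun x => -Real.log (x₂ - x) with hfdef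
  set μ := l.measure.restrict (Set.Ioc x₁ x₂) with hμdef
  have hfm : Measurable f := (Real.measurable_log.comp (measurable_const.sub measurable_id)).neg
  have hfnn : ∀ x ∈ Set.Ioc x₁ x₂, 0 ≤ f x := by
    intro x hx
    have h1 : 0 ≤ x₂ - x := by linarith [hx.2]
    have h2 : x₂ - x ≤ 1 := by linarith [hx.1]
    simpa [hfdef] using Real.log_nonpos h1 h2
  have hae : 0 ≤ᵐ[μ] f :=
    (ae_restrict_iff' measurableSet_Ioc).2 (Filter.Eventually.of_forall hfnn)
  by_cases hint : Integrable f μ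
  · rw [show (∫ x in Set.Ioc x₁ x₂, -Real.log (x₂ - x) ∂l.measure) = ∫ x, f x ∂μ from rfl]
    rw [hint.integral_eq_integral_meas_lt hae]
    -- pointwise bound of superlevel measure
    have key : ∀ t ∈ Set.Ioi (0:ℝ), (μ {a | t < f a}).toReal
        ≤ (if t ≤ T then C * Real.sqrt δ else C * Real.exp (-t / 2)) := by
      intro t ht
      set m := max x₁ (x₂ - Real.exp (-t)) with hmdef
      have hm1 : x₁ ≤ m := le_max_left _ _
      have hm2 : m ≤ x₂ := max_le (by linarith) (by linarith [Real.exp_pos (-t)])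
      have hsub : {a | t < f a} ∩ Set.Ioc x₁ x₂ ⊆ Set.Ioc m x₂ := by
        rintro a ⟨hta, ha1, ha2⟩
        refine ⟨max_lt ha1 ?_, ha2⟩
        by_contra hcon
        push_neg at hcon
        have h1 : Real.exp (-t) ≤ x₂ - a := by linarith
        have h2 : -t ≤ Real.log (x₂ - a) := by
          calc -t = Real.log (Real.exp (-t)) := (Real.log_exp _).symm
            _ ≤ Real.log (x₂ - a) := Real.log_le_log (Real.exp_pos _) h1
        have : f a ≤ t := by simp only [hfdef]; linarith
        exact absurd hta (not_lt.mpr this)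
      have hmeasS : MeasurableSet {a | t < f a} := measurableSet_lt measurable_const hfm
      have hfin : l.measure (Set.Ioc m x₂) ≠ ⊤ := by
        rw [l.measure_Ioc]; exact ENNReal.ofReal_ne_top
      have hle1 : (μ {a | t < f a}).toReal ≤ (l.measure (Set.Ioc m x₂)).toReal := by
        rw [hμdef, Measure.restrict_apply hmeasS]
        exact ENNReal.toReal_mono hfin (measure_mono hsub)
      have hle2 : (l.measure (Set.Ioc m x₂)).toReal ≤ C * Real.sqrt (x₂ - m) := by
        rw [l.measure_Ioc, ENNReal.toReal_ofReal_eq_iff.mpr]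
        · exact hhold m x₂ hm1 hm2 le_rfl
        · exact sub_nonneg.mpr (l.mono hm2)
      have hbase : (μ {a | t < f a}).toReal ≤ C * Real.sqrt (x₂ - m) := hle1.trans hle2
      by_cases htT : t ≤ T
      · rw [if_pos htT]
        refine hbase.trans (mul_le_mul_of_nonneg_left ?_ hC.le)
        refine Real.sqrt_le_sqrt ?_
        rw [hδdef]
        linarith
      · rw [if_neg htT]
        refine hbase.trans (mul_le_mul_of_nonneg_left ?_ hC.le)
        have h1 : x₂ - m ≤ Real.exp (-t) := by
          have : x₂ - Real.exp (-t) ≤ m := le_max_right _ _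
          linarith
        calc Real.sqrt (x₂ - m) ≤ Real.sqrt (Real.exp (-t)) := Real.sqrt_le_sqrt h1
          _ = Real.exp (-t / 2) := by rw [← Real.exp_half]
    -- the majorant and its integral
    set h : ℝ → ℝ := fun t => if t ≤ T then C * Real.sqrt δ else C * Real.exp (-t / 2)
      with hhdef
    have hIoc : IntegrableOn h (Set.Ioc 0 T) := by
      have hc : IntegrableOn (fun _ : ℝ => C * Real.sqrt δ) (Set.Ioc 0 T) :=
        (integrableOn_const_iff (C := C * Real.sqrt δ)).mpr (Or.inr measure_Ioc_lt_top)
      exact hc.congr_fun (fun x hx => by simp [hhdef, if_pos hx.2]) measurableSet_Ioc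
    have hIoi : IntegrableOn h (Set.Ioi T) := by
      have hc : IntegrableOn (fun t : ℝ => C * Real.exp (-t / 2)) (Set.Ioi T) :=
        ((aux_exp_ioi T).1).const_mul C
      exact hc.congr_fun (fun x hx => by simp [hhdef, if_neg (not_le.mpr (show T < x from hx))])
        measurableSet_Ioi
    have hunion : Set.Ioc (0:ℝ) T ∪ Set.Ioi T = Set.Ioi 0 := Set.Ioc_union_Ioi_eq_Ioi hT0.le
    have hhint : IntegrableOn h (Set.Ioi 0) := by
      rw [← hunion]; exact hIoc.union hIoi
    have hmono : ∫ t in Set.Ioi (0:ℝ), (μ {a | t < f a}).toReal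
        ≤ ∫ t in Set.Ioi (0:ℝ), h t := by
      apply integral_mono_of_nonneg
      · exact Filter.Eventually.of_forall fun t => ENNReal.toReal_nonneg
      · exact hhint
      · exact (ae_restrict_iff' measurableSet_Ioi).2 (Filter.Eventually.of_forall key)
    have hcalc : ∫ t in Set.Ioi (0:ℝ), h t
        = C * Real.sqrt δ * T + C * (2 * Real.exp (-T / 2)) := by
      rw [← hunion, setIntegral_union (Set.Ioc_disjoint_Ioi le_rfl) measurableSet_Ioi hIoc hIoi]
      congr 1
      · rw [setIntegral_congr_fun measurableSet_Ioc
          (g := fun _ => C * Real.sqrt δ) (fun x hx => by simp [hhdef, if_pos hx.2])]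
        simp [Real.volume_Ioc, ENNReal.toReal_ofReal hT0.le, mul_comm, hT0.le]
      · rw [setIntegral_congr_fun measurableSet_Ioi
          (g := fun t => C * Real.exp (-t / 2))
          (fun x hx => by simp [hhdef, if_neg (not_le.mpr (show T < x from hx))])]
        rw [integral_const_mul, (aux_exp_ioi T).2]
    have hexpT : Real.exp (-T / 2) = Real.sqrt δ := by
      rw [hTdef]
      rw [Real.log_div one_ne_zero (ne_of_gt hδ), Real.log_one]
      have : -(0 - Real.log δ) / 2 = Real.log δ / 2 := by ring
      rw [this, Real.exp_half, Real.exp_log hδ]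
    calc ∫ t in Set.Ioi (0:ℝ), (μ {a | t < f a}).toReal
        ≤ ∫ t in Set.Ioi (0:ℝ), h t := hmono
      _ = C * Real.sqrt δ * T + C * (2 * Real.sqrt δ) := by rw [hcalc, hexpT]
      _ ≤ 3 * C * Real.sqrt δ * T := by nlinarith [mul_nonneg (mul_nonneg hC.le hsq.le) (sub_nonneg.mpr hT1)]
  · rw [show (∫ x in Set.Ioc x₁ x₂, -Real.log (x₂ - x) ∂l.measure) = ∫ x, f x ∂μ from rfl]
    rw [integral_undef hint]
    exact (mul_pos (mul_pos (by linarith : (0:ℝ) < 3 * C) hsq) hT0).le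
end
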